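/- Let [M] be the set of 3×3 real matrices M with diagonal entries m₁₁ = m₂₂ = m₃₃ = 1 and every off-diagonal entry in the interval [0, 1/2], and let [q] be the set of q ∈ ℝ³ with q₁ = −6, q₂ ∈ [1, 2], q₃ ∈ [−3, −2]. Then z̲ = (6, 0, 3) solves LCP(M̲, q̲), where M̲ is the 3×3 identity matrix and q̲ = (−6, 1, −3), and every vector z that solves LCP(M, q) for some M ∈ [M] and q ∈ [q] satisfies z ≤ (6, 0, 3) entrywise. -/

import Mathlib

/-- `z` solves the linear complementarity problem LCP(M, q). -/
def SolvesLCP {n : ℕ} (M : Matrix (Fin n) (Fin n) ℝ) (q z : Fin n → ℝ) : Prop :=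
  (∀ i, 0 ≤ q i + M.mulVec z i) ∧ (∀ i, 0 ≤ z i) ∧ (∑ i, (q i + M.mulVec z i) * z i) = 0

/-- Membership of a 3×3 matrix in the interval matrix of Example 6.2.1:
diagonal entries equal 1, off-diagonal entries in [0, 1/2]. -/
def MemIntervalM (M : Matrix (Fin 3) (Fin 3) ℝ) : Prop :=
  (∀ i, M i i = 1) ∧ (∀ i j, i ≠ j → M i j ∈ Set.Icc (0 : ℝ) (1/2))

/-- Membership of a vector in the interval vector of Example 6.2.1. -/
def MemIntervalQ (q : Fin 3 → ℝ) : Prop :=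
  q 0 = -6 ∧ q 1 ∈ Set.Icc (1 : ℝ) 2 ∧ q 2 ∈ Set.Icc (-3 : ℝ) (-2)

/-!
Complementarity forces, in each row, either `z i = 0` or `q i + (M z) i = 0`. When the
off-diagonal entries of row `i` are nonnegative, `(M z) i ≥ M i i * z i`, so in the second
case `M i i * z i ≤ -q i`. With unit diagonal this bounds `z i` by `max 0 (-q i)`, which is
`6`, `0` and at most `3` for the three rows of any `q ∈ [q]`.
-/

theorem SolvesLCP.mul_apply_eq_zero {n : ℕ} {M : Matrix (Fin n) (Fin n) ℝ} {q z : Fin n → ℝ}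
    (h : SolvesLCP M q z) (i : Fin n) : (q i + M.mulVec z i) * z i = 0 :=
  (Finset.sum_eq_zero_iff_of_nonneg fun j _ => mul_nonneg (h.1 j) (h.2.1 j)).mp h.2.2 i
    (Finset.mem_univ i)

theorem Matrix.diag_mul_le_mulVec_apply {n : ℕ} {M : Matrix (Fin n) (Fin n) ℝ} {z : Fin n → ℝ}
    {i : Fin n} (hM : ∀ j, j ≠ i → 0 ≤ M i j) (hz : ∀ j, 0 ≤ z j) :
    M i i * z i ≤ M.mulVec z i := by
  rw [Matrix.mulVec, dotProduct, ← Finset.add_sum_erase _ _ (Finset.mem_univ i)]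
  exact le_add_of_nonneg_right <| Finset.sum_nonneg fun j hj =>
    mul_nonneg (hM j (Finset.ne_of_mem_erase hj)) (hz j)

theorem SolvesLCP.diag_mul_le {n : ℕ} {M : Matrix (Fin n) (Fin n) ℝ} {q z : Fin n → ℝ}
    (h : SolvesLCP M q z) {i : Fin n} (hM : ∀ j, j ≠ i → 0 ≤ M i j) :
    M i i * z i ≤ max 0 (-q i) := by
  rcases mul_eq_zero.mp (h.mul_apply_eq_zero i) with hw | hz
  · exact le_max_of_le_right (by linarith [Matrix.diag_mul_le_mulVec_apply hM h.2.1])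
  · simp [hz]

theorem stmt16 :
    SolvesLCP (1 : Matrix (Fin 3) (Fin 3) ℝ) ![-6, 1, -3] ![6, 0, 3] ∧
    ∀ (M : Matrix (Fin 3) (Fin 3) ℝ) (q z : Fin 3 → ℝ),
      MemIntervalM M → MemIntervalQ q → SolvesLCP M q z →
      ∀ i, z i ≤ (![6, 0, 3] : Fin 3 → ℝ) i := by
  refine ⟨?_, fun M q z ⟨hdiag, hoff⟩ ⟨hq0, hq1, hq2⟩ hsol i => ?_⟩
  · refine ⟨fun i => ?_, fun i => ?_, ?_⟩
    · fin_cases i <;> simp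
    · fin_cases i <;> simp
    · simp [Fin.sum_univ_three]
  · have hbound := hsol.diag_mul_le (i := i) fun j hj => (hoff i j hj.symm).1
    rw [hdiag, one_mul] at hbound
    rw [Set.mem_Icc] at hq1 hq2
    refine hbound.trans ?_
    fin_cases i <;> simp [hq0] <;> linarith
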